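/- arXiv:1508.07867 — 3 statements merged into one kernel-verified Lean document; each statement's English description precedes it below -/
import Mathlib

section
/- Let p, p' ∈ ℂʳ be points such that for every polynomial g in r variables with coefficients algebraic over ℚ, one has g(p) = 0 if and only if g(p') = 0. Then there exists a ring automorphism σ of ℂ such that σ(a) = a for every a ∈ ℂ algebraic over ℚ, and σ(pᵢ) = p'ᵢ for all i = 1,…,r. -/
/-!
Let `K = ℚ̄ ⊆ ℂ`. Evaluation at `p` and at `p'` are ring maps `K[X₁, …, X_r] → ℂ` with the same
kernel, so they induce two embeddings of one countable domain `B` into `ℂ`. Over either copy of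
`B`, a transcendence basis of `ℂ` has cardinality `#ℂ` because `ℂ` is uncountable, so the two
bases are equipotent; the resulting isomorphism of the adjoined subalgebras extends to their
algebraic closure `ℂ`. The automorphism obtained intertwines the two evaluations, hence fixes the
constants `K` and sends each `p i = X i (p)` to `p' i`.
-/

open scoped Cardinal

namespace IsAlgClosed

universe u

theorem exists_ringEquiv_commutes {R L M : Type u} [CommRing R] [Nontrivial R]
    [Field L] [Field M] [IsAlgClosed L] [IsAlgClosed M] [Algebra R L] [Algebra R M]
    [FaithfulSMul R L] [FaithfulSMul R M]
    (hR : #R ≤ ℵ₀) (hL : ℵ₀ < #L) (hLM : #L = #M) :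
    ∃ σ : L ≃+* M, ∀ x, σ (algebraMap R L x) = algebraMap R M x := by
  obtain ⟨s, hs⟩ := exists_isTranscendenceBasis R L
  obtain ⟨t, ht⟩ := exists_isTranscendenceBasis R M
  have hst : #s = #t := by
    rw [← cardinal_eq_cardinal_transcendence_basis_of_aleph0_lt' _ hs hR hL,
      ← cardinal_eq_cardinal_transcendence_basis_of_aleph0_lt' _ ht hR (hLM ▸ hL), hLM]
  obtain ⟨e⟩ := Cardinal.eq.1 hst
  have := isAlgClosure_of_transcendence_basis _ hs
  have := isAlgClosure_of_transcendence_basis _ ht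
  let E : Algebra.adjoin R (Set.range ((↑) : s → L)) ≃ₐ[R]
      Algebra.adjoin R (Set.range ((↑) : t → M)) :=
    hs.1.aevalEquiv.symm.trans ((MvPolynomial.renameEquiv R e).trans ht.1.aevalEquiv)
  refine ⟨IsAlgClosure.equivOfEquiv L M E.toRingEquiv, fun x => ?_⟩
  rw [IsScalarTower.algebraMap_apply R (Algebra.adjoin R (Set.range ((↑) : s → L))) L,
    IsAlgClosure.equivOfEquiv_algebraMap, AlgEquiv.coe_ringEquiv, E.commutes,
    ← IsScalarTower.algebraMap_apply]

theorem exists_ringEquiv_comp_eq_of_ker_eq {A L M : Type u} [CommRing A]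
    [Field L] [Field M] [IsAlgClosed L] [IsAlgClosed M]
    (hA : #A ≤ ℵ₀) (hL : ℵ₀ < #L) (hLM : #L = #M)
    (f : A →+* L) (g : A →+* M) (hfg : RingHom.ker f = RingHom.ker g) :
    ∃ σ : L ≃+* M, ∀ x, σ (f x) = g x := by
  let B := A ⧸ RingHom.ker f
  have : Nontrivial B := Ideal.Quotient.nontrivial_iff.mpr (RingHom.ker_ne_top f)
  let _ : Algebra B L := (RingHom.kerLift f).toAlgebra
  let _ : Algebra B M := (Ideal.Quotient.lift _ g (fun a ha => by rwa [hfg] at ha)).toAlgebra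
  have : FaithfulSMul B L :=
    (faithfulSMul_iff_algebraMap_injective B L).mpr (RingHom.kerLift_injective f)
  have : FaithfulSMul B M := (faithfulSMul_iff_algebraMap_injective B M).mpr
    (RingHom.lift_injective_of_ker_le_ideal _ _ hfg.ge)
  have hB : #B ≤ ℵ₀ := (Cardinal.mk_le_of_surjective Ideal.Quotient.mk_surjective).trans hA
  obtain ⟨σ, hσ⟩ := exists_ringEquiv_commutes (R := B) hB hL hLM
  exact ⟨σ, fun x => hσ (Ideal.Quotient.mk _ x)⟩

end IsAlgClosed

/-- If two points `p, p' ∈ ℂʳ` lie on exactly the same hypersurfaces defined over `ℚ̄`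
(the algebraic closure of `ℚ` in `ℂ`), then there is a field automorphism of `ℂ` fixing
`ℚ̄` pointwise carrying `p` to `p'`. -/
theorem exists_galois_automorphism_of_same_Qbar_hypersurfaces (r : ℕ)
    (p p' : Fin r → ℂ)
    (h : ∀ g : MvPolynomial (Fin r) ℂ,
      (∀ d : Fin r →₀ ℕ, IsAlgebraic ℚ (MvPolynomial.coeff d g)) →
      (MvPolynomial.eval p g = 0 ↔ MvPolynomial.eval p' g = 0)) :
    ∃ σ : ℂ ≃+* ℂ, (∀ a : ℂ, IsAlgebraic ℚ a → σ a = a) ∧ ∀ i, σ (p i) = p' i := by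
  let K := algebraicClosure ℚ ℂ
  have hK : #K ≤ ℵ₀ :=
    ((Algebraic.countable ℚ ℂ).mono fun _ => mem_algebraicClosure_iff.mp).le_aleph0
  have hA : #(MvPolynomial (Fin r) K) ≤ ℵ₀ :=
    MvPolynomial.cardinalMk_le_max.trans (by simp [hK])
  have hker : RingHom.ker (MvPolynomial.eval₂Hom (algebraMap K ℂ) p) =
      RingHom.ker (MvPolynomial.eval₂Hom (algebraMap K ℂ) p') := by
    ext g
    have hcoeff (d : Fin r →₀ ℕ) : IsAlgebraic ℚ ((g.map (algebraMap K ℂ)).coeff d) := by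
      rw [MvPolynomial.coeff_map]
      exact mem_algebraicClosure_iff.mp (g.coeff d).2
    simpa [MvPolynomial.eval_map] using h _ hcoeff
  obtain ⟨σ, hσ⟩ := IsAlgClosed.exists_ringEquiv_comp_eq_of_ker_eq hA
    (Cardinal.mk_complex ▸ Cardinal.aleph0_lt_continuum) rfl _ _ hker
  refine ⟨σ, fun a ha => ?_, fun i => ?_⟩
  · simpa using hσ (MvPolynomial.C ⟨a, mem_algebraicClosure_iff.mpr ha⟩)
  · simpa using hσ (MvPolynomial.X i)
end

section
/- Let T ⊆ ℂⁿ be the common zero set of a family of polynomials in n variables with coefficients algebraic over ℚ, and let q ∈ T be a point isolated in T with respect to the Euclidean topology (i.e., there is a Euclidean open neighborhood of q meeting T only in q). Then every coordinate of q is algebraic over ℚ. -/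
/-!
Suppose some coordinate `q i₀` is transcendental over `K = ℚ̄`. Extend it to a set `u ⊆ {q i}`
algebraically independent over `K` over which every `q i` is algebraic. Translating the element
`q i₀` of `u` by a small `k ∈ K` keeps `u` algebraically independent, so it defines embeddings
`σ_k : K(u) → ℂ` over `K` that converge pointwise to the inclusion as `k → 0`. Write `q i = g i (θ)`
for a primitive element `θ` of `K(u)(q)` with minimal polynomial `m`. By continuity of roots,
`m^{σ_k}` has a root `θ_k` close to `θ`, and the point `(g i^{σ_k}(θ_k))_i` is again a zero of
every polynomial over `K` vanishing at `q`, lies close to `q`, and has `i₀`-th coordinate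
`q i₀ + k ≠ q i₀`. Hence `q` is not isolated.
-/

open Filter Topology

namespace Polynomial

section Roots

variable {𝕜 : Type*} [NormedField 𝕜] [IsAlgClosed 𝕜]

theorem exists_isRoot_norm_sub_pow_natDegree_le {f : 𝕜[X]} (hf : f.Monic)
    (hdeg : 0 < f.natDegree) (z : 𝕜) :
    ∃ r, f.IsRoot r ∧ ‖z - r‖ ^ f.natDegree ≤ ‖f.eval z‖ := by
  classical
  have hsplit := IsAlgClosed.splits f
  have hcard : Multiset.card f.roots = f.natDegree := hsplit.natDegree_eq_card_roots.symm
  have hne : f.roots.toFinset.Nonempty := by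
    rwa [Multiset.toFinset_nonempty, ← Multiset.card_pos, hcard]
  obtain ⟨r, hr, hmin⟩ := f.roots.toFinset.exists_min_image (‖z - ·‖) hne
  refine ⟨r, isRoot_of_mem_roots (Multiset.mem_toFinset.1 hr), ?_⟩
  calc ‖z - r‖ ^ f.natDegree = (f.roots.map fun _ => ‖z - r‖).prod := by simp [hcard]
    _ ≤ (f.roots.map fun b => ‖z - b‖).prod :=
      Multiset.prod_map_le_prod_map₀ _ _ (fun _ _ => norm_nonneg _)
        fun b hb => hmin b (Multiset.mem_toFinset.2 hb)
    _ = ‖f.eval z‖ := by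
      rw [hsplit.eval_eq_prod_roots_of_monic hf]
      exact Multiset.prod_hom' f.roots (normHom (α := 𝕜)) (z - ·)

theorem exists_tendsto_isRoot {α : Type*} {l : Filter α} {f : α → 𝕜[X]} {d : ℕ} (hd : 0 < d)
    (hf : ∀ a, (f a).Monic) (hdeg : ∀ a, (f a).natDegree = d) {z : 𝕜}
    (hz : Tendsto (fun a => (f a).eval z) l (𝓝 0)) :
    ∃ r : α → 𝕜, (∀ a, (f a).IsRoot (r a)) ∧ Tendsto r l (𝓝 z) := by
  choose r hr hle using fun a => exists_isRoot_norm_sub_pow_natDegree_le (hf a) (hdeg a ▸ hd) z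
  refine ⟨r, hr, tendsto_iff_norm_sub_tendsto_zero.2 ?_⟩
  have hroot : Tendsto (fun a => ‖(f a).eval z‖ ^ (d⁻¹ : ℝ)) l (𝓝 0) := by
    simpa [Real.zero_rpow (inv_ne_zero (Nat.cast_ne_zero.2 hd.ne'))] using
      hz.norm.rpow_const (Or.inr (inv_nonneg.2 d.cast_nonneg))
  refine squeeze_zero (fun _ => norm_nonneg _) (fun a => ?_) hroot
  rw [norm_sub_rev, ← Real.pow_rpow_inv_natCast (norm_nonneg _) hd.ne']
  gcongr
  exact hdeg a ▸ hle a

end Roots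

theorem tendsto_eval₂ {R S α : Type*} [Semiring R] [CommSemiring S] [TopologicalSpace S]
    [IsTopologicalSemiring S] {l : Filter α} {σ : α → R →+* S} {τ : R →+* S}
    (hσ : ∀ c, Tendsto (fun a => σ a c) l (𝓝 (τ c))) {r : α → S} {z : S}
    (hr : Tendsto r l (𝓝 z)) (p : R[X]) :
    Tendsto (fun a => p.eval₂ (σ a) (r a)) l (𝓝 (p.eval₂ τ z)) := by
  simp only [eval₂_eq_sum, Polynomial.sum_def]
  exact tendsto_finsetSum _ fun n _ => (hσ _).mul (hr.pow n)

theorem eval₂_aeval_mvPolynomial {R S ι : Type*} [CommSemiring R] [CommSemiring S]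
    (f : R →+* S) (s : S) (g : ι → R[X]) (P : MvPolynomial ι R) :
    (MvPolynomial.aeval g P).eval₂ f s = MvPolynomial.eval₂ f (fun i => (g i).eval₂ f s) P := by
  rw [MvPolynomial.aeval_def, ← coe_eval₂RingHom, MvPolynomial.eval₂_comp_left]
  congr 1
  ext c
  simp

end Polynomial

section Specialization

open Polynomial IntermediateField

theorem exists_isIntegral_forall_exists_aeval_eq {L F ι : Type*} [Field L] [PerfectField L]
    [Field F] [Algebra L F] [Finite ι] {x : ι → F} (hx : ∀ i, IsAlgebraic L (x i)) :
    ∃ θ : F, IsIntegral L θ ∧ ∀ i, ∃ g : L[X], aeval θ g = x i := by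
  set E := adjoin L (Set.range x)
  have : FiniteDimensional L E := finiteDimensional_adjoin fun _ ⟨i, hi⟩ => hi ▸ (hx i).isIntegral
  obtain ⟨α, hα⟩ := Field.exists_primitive_element L E
  have hθ : L⟮(α : F)⟯ = E := by
    simpa only [lift_adjoin_simple, IntermediateField.lift_top] using congr_arg lift hα
  have hint : IsIntegral L (α : F) := (IsIntegral.of_finite L α).map E.val
  refine ⟨α, hint, fun i => ?_⟩
  have hmem : x i ∈ Algebra.adjoin L {(α : F)} := by
    rw [← adjoin_simple_toSubalgebra_of_isAlgebraic hint.isAlgebraic, hθ]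
    exact subset_adjoin L _ ⟨i, rfl⟩
  rwa [Algebra.adjoin_singleton_eq_range_aeval] at hmem

theorem exists_tendsto_forall_eval_map_eq_zero {L 𝕜 ι α : Type*} [Field L] [PerfectField L]
    [NormedField 𝕜] [IsAlgClosed 𝕜] [Algebra L 𝕜] [Finite ι] {l : Filter α}
    {σ : α → L →+* 𝕜} (hσ : ∀ c, Tendsto (fun a => σ a c) l (𝓝 (algebraMap L 𝕜 c)))
    {x : ι → 𝕜} (hx : ∀ i, IsAlgebraic L (x i)) :
    ∃ y : α → ι → 𝕜, Tendsto y l (𝓝 x) ∧ ∀ a (P : MvPolynomial ι L),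
      MvPolynomial.aeval x P = 0 → MvPolynomial.eval (y a) (P.map (σ a)) = 0 := by
  obtain ⟨θ, hθ, hg⟩ := exists_isIntegral_forall_exists_aeval_eq hx
  choose g hg using hg
  have hm := minpoly.monic hθ
  have hmθ : Tendsto (fun a => ((minpoly L θ).map (σ a)).eval θ) l (𝓝 0) := by
    simpa [eval_map, ← aeval_def] using
      tendsto_eval₂ hσ (tendsto_const_nhds (x := θ)) (minpoly L θ)
  obtain ⟨r, hr, hrθ⟩ := exists_tendsto_isRoot (minpoly.natDegree_pos hθ)
    (fun a => hm.map (σ a)) (fun a => hm.natDegree_map (σ a)) hmθ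
  refine ⟨fun a i => (g i).eval₂ (σ a) (r a), tendsto_pi_nhds.2 fun i => ?_, fun a P hP => ?_⟩
  · simpa [← hg i, aeval_def] using tendsto_eval₂ hσ hrθ (g i)
  · obtain ⟨h, hh⟩ : minpoly L θ ∣ MvPolynomial.aeval g P := by
      refine minpoly.dvd L θ ?_
      rw [← AlgHom.comp_apply, MvPolynomial.comp_aeval]
      simpa [hg] using hP
    rw [MvPolynomial.eval_map, ← eval₂_aeval_mvPolynomial, hh, eval₂_mul, ← eval_map,
      (hr a).eq_zero, zero_mul]

end Specialization

namespace AlgebraicIndependent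

open IntermediateField MvPolynomial

theorem update_add_algebraMap {ι R A : Type*} [CommRing R] [CommRing A] [Algebra R A]
    [DecidableEq ι] {v : ι → A} (hv : AlgebraicIndependent R v) (i : ι) (r : R) :
    AlgebraicIndependent R (Function.update v i (v i + algebraMap R A r)) := by
  let shift (s : R) : MvPolynomial ι R →ₐ[R] MvPolynomial ι R :=
    aeval (Function.update X i (X i + C s))
  have hinv : (shift (-r)).comp (shift r) = AlgHom.id R _ := by
    refine algHom_ext fun j => ?_
    rcases eq_or_ne j i with rfl | hj <;> simp [shift, *]
  have hcomp : aeval (Function.update v i (v i + algebraMap R A r)) = (aeval v).comp (shift r) := by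
    refine algHom_ext fun j => ?_
    rcases eq_or_ne j i with rfl | hj <;> simp [shift, *]
  rw [algebraicIndependent_iff_injective_aeval, hcomp, AlgHom.coe_comp]
  exact (algebraicIndependent_iff_injective_aeval.1 hv).comp
    (Function.LeftInverse.injective (g := shift (-r)) (AlgHom.congr_fun hinv))

variable {ι F E : Type*} [Field F] [Field E] [Algebra F E] {v w : ι → E}

noncomputable def liftAdjoin (hv : AlgebraicIndependent F v) (hw : AlgebraicIndependent F w) :
    adjoin F (Set.range v) →ₐ[F] E :=
  (IsFractionRing.liftAlgHom (algebraicIndependent_iff_injective_aeval.2 hw)).comp hv.reprField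

theorem liftAdjoin_aevalEquivField (hv : AlgebraicIndependent F v)
    (hw : AlgebraicIndependent F w) (p : FractionRing (MvPolynomial ι F)) :
    hv.liftAdjoin hw (hv.aevalEquivField p) =
      IsFractionRing.lift (algebraicIndependent_iff_injective_aeval.2 hw) p := by
  simp [liftAdjoin, reprField]
  rfl

theorem liftAdjoin_apply (hv : AlgebraicIndependent F v) (hw : AlgebraicIndependent F w) (i : ι) :
    hv.liftAdjoin hw ⟨v i, subset_adjoin F _ ⟨i, rfl⟩⟩ = w i := by
  have : (⟨v i, subset_adjoin F _ ⟨i, rfl⟩⟩ : adjoin F (Set.range v)) =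
      hv.aevalEquivField (algebraMap (MvPolynomial ι F) _ (X i)) := by
    ext; simp
  rw [this, liftAdjoin_aevalEquivField]
  simp

theorem tendsto_liftAdjoin [TopologicalSpace E] [IsTopologicalDivisionRing E]
    {α : Type*} {l : Filter α} {w : α → ι → E} (hv : AlgebraicIndependent F v)
    (hw : ∀ a, AlgebraicIndependent F (w a)) (hwv : Tendsto w l (𝓝 v))
    (c : adjoin F (Set.range v)) :
    Tendsto (fun a => hv.liftAdjoin (hw a) c) l (𝓝 (c : E)) := by
  obtain ⟨p, r, hr, hc⟩ := IsFractionRing.div_surjective (A := MvPolynomial ι F) (hv.reprField c)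
  have hc' : c = hv.aevalEquivField (algebraMap _ _ p / algebraMap _ _ r) := by
    rw [hc]; exact (hv.aevalEquivField.apply_symm_apply c).symm
  have hlift {u : ι → E} (hu : AlgebraicIndependent F u) :
      hv.liftAdjoin hu c = aeval u p / aeval u r := by
    rw [hc', liftAdjoin_aevalEquivField]
    simp [IsFractionRing.lift_algebraMap]
  have haeval (s : MvPolynomial ι F) : Tendsto (fun a => aeval (w a) s) l (𝓝 (aeval v s)) := by
    simpa [aeval_def, eval_map, Function.comp_def] using
      ((continuous_eval (s.map (algebraMap F E))).tendsto v).comp hwv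
  have hlim : (c : E) = aeval v p / aeval v r := (hv.lift_reprField c).symm.trans (hlift hv)
  simp_rw [hlift, hlim]
  refine (haeval p).div (haeval r) fun h => nonZeroDivisors.ne_zero hr ?_
  exact algebraicIndependent_iff_injective_aeval.1 hv (h.trans (map_zero _).symm)

end AlgebraicIndependent

theorem exists_algebraicIndependent_mem_forall_isAlgebraic {R A : Type*} [CommRing R]
    [CommRing A] [IsDomain A] [Algebra R A] [FaithfulSMul R A] {s : Set A} {a : A} (ha : a ∈ s)
    (htr : Transcendental R a) :
    ∃ J ⊆ s, a ∈ J ∧ AlgebraicIndependent R ((↑) : J → A) ∧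
      ∀ b ∈ s, IsAlgebraic (Algebra.adjoin R J) b := by
  have hindep : (AlgebraicIndependent.matroid R A).Indep {a} :=
    (algebraicIndependent_singleton_iff (x := fun b : ({a} : Set A) => (b : A)) ⟨a, rfl⟩).2 htr
  obtain ⟨J, hJ, haJ⟩ := hindep.subset_isBasis_of_subset (Set.singleton_subset_iff.2 ha)
  obtain ⟨hJind, hJs, halg⟩ := AlgebraicIndependent.matroid_isBasis_iff.1 hJ
  exact ⟨J, hJs, haJ rfl, hJind, halg⟩

open IntermediateField MvPolynomial in
theorem exists_tendsto_aeval_eq_zero_of_transcendental {K ι : Type*} [Field K] [Algebra K ℂ]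
    [Finite ι] {x : ι → ℂ} {i₀ : ι} (htr : Transcendental K (x i₀)) :
    ∃ y : ℕ → ι → ℂ, Tendsto y atTop (𝓝 x) ∧ (∀ m, y m i₀ ≠ x i₀) ∧
      ∀ m (P : MvPolynomial ι K), aeval x P = 0 → aeval (y m) P = 0 := by
  classical
  obtain ⟨J, -, hJ, hv, halg⟩ :=
    exists_algebraicIndependent_mem_forall_isAlgebraic (Set.mem_range_self i₀) htr
  set L := adjoin K (Set.range ((↑) : J → ℂ))
  have hx (i : ι) : IsAlgebraic L (x i) :=
    (Subtype.range_coe (s := J) ▸ halg _ (Set.mem_range_self i)).tower_top_of_subalgebra_le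
      (algebra_adjoin_le_adjoin K _)
  set t₀ : J := ⟨x i₀, hJ⟩
  set w : ℕ → J → ℂ := fun m => Function.update (↑) t₀ (x i₀ + algebraMap K ℂ (1 / ((m : K) + 1)))
  have hw (m : ℕ) : AlgebraicIndependent K (w m) := hv.update_add_algebraMap t₀ _
  have hwv : Tendsto w atTop (𝓝 (↑)) := by
    have hs : Tendsto (fun m : ℕ => algebraMap K ℂ (1 / ((m : K) + 1))) atTop (𝓝 0) := by
      simpa using tendsto_one_div_add_atTop_nhds_zero_nat (𝕜 := ℂ)
    have hg : Continuous fun z : ℂ => Function.update ((↑) : J → ℂ) t₀ (x i₀ + z) :=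
      continuous_const.update t₀ (continuous_const.add continuous_id)
    have hg0 : Function.update ((↑) : J → ℂ) t₀ (x i₀ + 0) = (↑) := by
      rw [add_zero]; exact Function.update_eq_self t₀ _
    have hlim := (hg.tendsto 0).comp hs
    rwa [hg0] at hlim
  obtain ⟨y, hy, hyP⟩ := exists_tendsto_forall_eval_map_eq_zero
    (σ := fun m => (hv.liftAdjoin (hw m)).toRingHom) (hv.tendsto_liftAdjoin hw hwv) hx
  refine ⟨y, hy, fun m => ?_, fun m P hP => ?_⟩
  · have h := hyP m (X i₀ - C ⟨x i₀, subset_adjoin K _ ⟨t₀, rfl⟩⟩) (by simp)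
    simp only [map_sub, map_X, map_C, eval_X, eval_C, AlgHom.toRingHom_eq_coe,
      RingHom.coe_coe, sub_eq_zero] at h
    rw [h, hv.liftAdjoin_apply (hw m) t₀]
    simp [w]
    exact_mod_cast Nat.succ_ne_zero m
  · have h := hyP m (P.map (algebraMap K L)) (by rwa [aeval_map_algebraMap])
    rwa [MvPolynomial.map_map, AlgHom.toRingHom_eq_coe, AlgHom.comp_algebraMap, eval_map,
      ← aeval_def] at h

/-- An isolated point (for the Euclidean topology) of the common zero set of a family of
polynomials with coefficients algebraic over `ℚ` has all of its coordinates algebraic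
over `ℚ`. -/
theorem isolated_point_of_Qbar_variety_is_algebraic (n : ℕ)
    (Ps : Set (MvPolynomial (Fin n) ℂ))
    (hPs : ∀ P ∈ Ps, ∀ d : Fin n →₀ ℕ, IsAlgebraic ℚ (MvPolynomial.coeff d P))
    (T : Set (EuclideanSpace ℂ (Fin n)))
    (hT : T = {x | ∀ P ∈ Ps, MvPolynomial.eval (fun i => x i) P = 0})
    (q : EuclideanSpace ℂ (Fin n)) (hq : q ∈ T)
    (hiso : ∃ U : Set (EuclideanSpace ℂ (Fin n)), IsOpen U ∧ q ∈ U ∧ T ∩ U = {q}) :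
    ∀ i, IsAlgebraic ℚ (q i) := by
  intro i₀
  by_contra htr
  obtain ⟨U, hU, hqU, hTU⟩ := hiso
  obtain ⟨y, hy, hne, hzero⟩ := exists_tendsto_aeval_eq_zero_of_transcendental
    (x := fun i => q i) (Transcendental.algebraicClosure (F := ℚ) (E := ℂ) htr)
  have hyT (m : ℕ) : WithLp.toLp 2 (y m) ∈ T := by
    rw [hT] at hq ⊢
    intro P hP
    obtain ⟨Q, rfl⟩ : P ∈ Set.range (MvPolynomial.map (algebraMap (algebraicClosure ℚ ℂ) ℂ)) := by
      refine MvPolynomial.mem_range_map_iff_coeffs_subset.2 fun c hc => ?_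
      obtain ⟨d, -, rfl⟩ := MvPolynomial.mem_coeffs_iff.1 hc
      exact ⟨⟨_, mem_algebraicClosure_iff.2 (hPs _ hP d)⟩, rfl⟩
    simpa [MvPolynomial.eval_map, MvPolynomial.aeval_def] using
      hzero m Q (by simpa [MvPolynomial.eval_map, MvPolynomial.aeval_def] using hq _ hP)
  have hyU : ∀ᶠ m in atTop, WithLp.toLp 2 (y m) ∈ U :=
    ((PiLp.continuous_toLp 2 _).tendsto _ |>.comp hy) (hU.mem_nhds hqU)
  obtain ⟨m, hm⟩ := hyU.exists
  have hyq : WithLp.toLp 2 (y m) ∈ T ∩ U := ⟨hyT m, hm⟩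
  rw [hTU] at hyq
  exact hne m (congrArg (· i₀) hyq)
end

section
/- Let V ⊆ (ℂˣ)ʳ be a finite union of torsion translates of subtori of (ℂˣ)ʳ. Suppose that for every ring automorphism σ of ℂ, the coordinatewise action of σ maps V into V. Then V is stable under coordinatewise inversion: if λ = (λ₁,…,λᵣ) ∈ V then λ⁻¹ = (λ₁⁻¹,…,λᵣ⁻¹) ∈ V. -/
/-- A subtorus of `(ℂˣ)ʳ`: the image of a monomial map `(ℂˣ)ᵈ → (ℂˣ)ʳ` given by an
integer matrix. -/
def IsSubtorus {r : ℕ} (T₀ : Set (Fin r → ℂˣ)) : Prop :=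
  ∃ (d : ℕ) (m : Matrix (Fin r) (Fin d) ℤ),
    T₀ = {x | ∃ t : Fin d → ℂˣ, ∀ i, x i = ∏ j, t j ^ m i j}

/-- A point of `(ℂˣ)ʳ` is torsion if all its coordinates are roots of unity. -/
def IsTorsionPoint {r : ℕ} (ρ : Fin r → ℂˣ) : Prop :=
  ∀ i, ∃ k : ℕ, 0 < k ∧ ρ i ^ k = 1

/-- A torsion translate of a subtorus of `(ℂˣ)ʳ`. -/
def IsTorsionTranslateOfSubtorus {r : ℕ} (V : Set (Fin r → ℂˣ)) : Prop :=
  ∃ (ρ : Fin r → ℂˣ) (T₀ : Set (Fin r → ℂˣ)), IsTorsionPoint ρ ∧ IsSubtorus T₀ ∧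
    V = (fun x => ρ * x) '' T₀

/-!
Complex conjugation is a ring automorphism of `ℂ` that inverts every root of unity. Writing a
point of a torsion translate as `ρ · x` with `ρ` torsion and `x` in the subtorus, the point
`ρ · conj(x⁻¹)` lies in the same translate (a subtorus is stable under every endomorphism of
`ℂˣ` applied coordinatewise), and its conjugate is `ρ⁻¹ · x⁻¹`.
-/

def unitsConj : ℂˣ →* ℂˣ := Units.map ((starRingAut : ℂ ≃+* ℂ) : ℂ →* ℂ)

theorem unitsConj_unitsConj (u : ℂˣ) : unitsConj (unitsConj u) = u := by
  ext
  exact Complex.conj_conj (u : ℂ)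

theorem unitsConj_eq_inv_of_pow_eq_one {u : ℂˣ} {n : ℕ} (hn : 0 < n) (hu : u ^ n = 1) :
    unitsConj u = u⁻¹ := by
  have hpow : (u : ℂ) ^ n = 1 := by rw [← Units.val_pow_eq_pow_val, hu, Units.val_one]
  ext
  rw [Units.val_inv_eq_inv_val]
  exact (Complex.inv_eq_conj (Complex.norm_eq_one_of_pow_eq_one hpow hn.ne')).symm

theorem IsTorsionPoint.unitsConj_eq_inv {r : ℕ} {ρ : Fin r → ℂˣ} (hρ : IsTorsionPoint ρ)
    (i : Fin r) : unitsConj (ρ i) = (ρ i)⁻¹ :=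
  let ⟨_, hn, hρn⟩ := hρ i
  unitsConj_eq_inv_of_pow_eq_one hn hρn

theorem IsSubtorus.map_mem {r : ℕ} {T₀ : Set (Fin r → ℂˣ)} (hT : IsSubtorus T₀)
    (f : ℂˣ →* ℂˣ) {x : Fin r → ℂˣ} (hx : x ∈ T₀) : (fun i => f (x i)) ∈ T₀ := by
  obtain ⟨d, m, rfl⟩ := hT
  obtain ⟨t, ht⟩ := hx
  exact ⟨fun j => f (t j), fun i => by simp only [ht i, map_prod, map_zpow]⟩

theorem IsTorsionTranslateOfSubtorus.exists_unitsConj_eq_inv {r : ℕ} {W : Set (Fin r → ℂˣ)}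
    (hW : IsTorsionTranslateOfSubtorus W) {lam : Fin r → ℂˣ} (hlam : lam ∈ W) :
    ∃ μ ∈ W, (fun i => unitsConj (μ i)) = lam⁻¹ := by
  obtain ⟨ρ, T₀, hρ, hT, rfl⟩ := hW
  obtain ⟨x, hx, rfl⟩ := hlam
  refine ⟨ρ * fun i => unitsConj (x i)⁻¹,
    ⟨_, hT.map_mem (unitsConj.comp invMonoidHom) hx, rfl⟩, ?_⟩
  funext i
  simp only [Pi.mul_apply, Pi.inv_apply, map_mul, hρ.unitsConj_eq_inv, unitsConj_unitsConj,
    mul_inv]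

/-- A finite union of torsion translates of subtori of `(ℂˣ)ʳ` that is stable under the
coordinatewise action of every ring automorphism of `ℂ` is stable under coordinatewise
inversion. -/
theorem inv_mem_of_galois_stable_union_of_torsion_translates (r : ℕ)
    (k : ℕ) (W : Fin k → Set (Fin r → ℂˣ))
    (hW : ∀ j, IsTorsionTranslateOfSubtorus (W j))
    (V : Set (Fin r → ℂˣ)) (hV : V = ⋃ j, W j)
    (hGal : ∀ σ : ℂ ≃+* ℂ, ∀ lam ∈ V, (fun i => Units.map (σ : ℂ →* ℂ) (lam i)) ∈ V) :
    ∀ lam ∈ V, lam⁻¹ ∈ V := by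
  intro lam hlam
  subst hV
  obtain ⟨j, hj⟩ := Set.mem_iUnion.mp hlam
  obtain ⟨μ, hμ, hμlam⟩ := (hW j).exists_unitsConj_eq_inv hj
  rw [← hμlam]
  exact hGal starRingAut μ (Set.mem_iUnion_of_mem j hμ)
end
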